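/- arXiv:2012.12772 — 3 statements merged into one kernel-verified Lean document; each statement's English description precedes it below -/
import Mathlib

section
/- For any symmetric matrix A with zero diagonal, ||A||_* ≤ √2 ||A - JAJ||_F + ||JAJ||_*, where J is the centering matrix, ||·||_* the nuclear norm, and ||·||_F the Frobenius norm. -/
/-!
For a symmetric matrix the nuclear norm is the sum of the absolute values of the eigenvalues,
and this is subadditive: diagonalising `B + C` by an orthogonal `V`, the absolute diagonal
entries of `Vᵀ B V` sum to at most `∑ |λᵢ(B)|`, since their weights on `|λₖ(B)|` are the squared
entries of an orthogonal matrix. Hence `‖A‖_* ≤ ‖A - JAJ‖_* + ‖JAJ‖_*`. With `J = 1 - K` and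
`K = (1/n) 𝟙𝟙ᵀ` of rank one, `A - JAJ = KA + JAK` has rank at most two, and by Cauchy–Schwarz
over its nonzero singular values, `‖M‖_* ≤ √(rank M) ‖M‖_F`.
-/

open Matrix

/-- The centering matrix `J = I - (1/n) 𝟙𝟙ᵀ`. -/
noncomputable def centerJ (n : ℕ) : Matrix (Fin n) (Fin n) ℝ :=
  1 - ((n : ℝ))⁻¹ • Matrix.of (fun _ _ => (1 : ℝ))

/-- The Frobenius norm of a real square matrix. -/
noncomputable def frobNorm {n : ℕ} (A : Matrix (Fin n) (Fin n) ℝ) : ℝ :=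
  Real.sqrt (∑ i, ∑ j, (A i j) ^ 2)

/-- The nuclear norm (sum of singular values) of a real square matrix. -/
noncomputable def nuclearNorm {n : ℕ} (A : Matrix (Fin n) (Fin n) ℝ) : ℝ :=
  ∑ i, Real.sqrt ((Matrix.isHermitian_conjTranspose_mul_self A).eigenvalues i)

theorem Polynomial.roots_prod_X_sub_C_univ {ι R : Type*} [Fintype ι] [CommRing R] [IsDomain R]
    (f : ι → R) : (∏ i, (X - C (f i))).roots = Finset.univ.val.map f := by
  rw [Finset.prod_eq_multiset_prod]
  simpa only [Multiset.map_map, Function.comp_def] using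
    roots_multiset_prod_X_sub_C (Finset.univ.val.map f)

namespace Matrix

theorem rank_add_le {m n R : Type*} [Fintype n] [Field R] (A B : Matrix m n R) :
    (A + B).rank ≤ A.rank + B.rank := by
  unfold rank
  rw [mulVecLin_add]
  exact (Submodule.finrank_mono (LinearMap.range_add_le _ _)).trans
    (Submodule.finrank_add_le_finrank_add_finrank _ _)

theorem rank_sub_one_sub_mul_mul_one_sub_le {ι R : Type*} [Fintype ι] [DecidableEq ι] [Field R]
    (K A : Matrix ι ι R) : (A - (1 - K) * A * (1 - K)).rank ≤ 2 * K.rank := by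
  have h : A - (1 - K) * A * (1 - K) = K * A + (1 - K) * A * K := by noncomm_ring
  rw [h, two_mul]
  exact (rank_add_le _ _).trans (add_le_add (rank_mul_le_left _ _) (rank_mul_le_right _ _))

namespace IsHermitian

variable {ι : Type*} [Fintype ι] [DecidableEq ι] {T : Matrix ι ι ℝ}

theorem star_eigenvectorUnitary_mul_mul_eigenvectorUnitary (hT : T.IsHermitian) :
    star (hT.eigenvectorUnitary : Matrix ι ι ℝ) * T * hT.eigenvectorUnitary =
      diagonal hT.eigenvalues := by
  simpa using hT.conjStarAlgAut_star_eigenvectorUnitary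

theorem sum_abs_diag_star_mul_mul_le (hT : T.IsHermitian) (U : unitaryGroup ι ℝ) :
    ∑ i, |(star (U : Matrix ι ι ℝ) * T * U) i i| ≤ ∑ k, |hT.eigenvalues k| := by
  set W := hT.eigenvectorUnitary
  set P : unitaryGroup ι ℝ := star W * U
  have hconj : star (U : Matrix ι ι ℝ) * T * U =
      star (P : Matrix ι ι ℝ) * diagonal hT.eigenvalues * P := by
    have hTW : T = W * diagonal hT.eigenvalues * star (W : Matrix ι ι ℝ) := by
      simpa using hT.spectral_theorem
    simp only [P, MulMemClass.coe_mul, Unitary.coe_star, star_mul, star_star, hTW, mul_assoc]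
  have hdiag (i : ι) : (star (P : Matrix ι ι ℝ) * diagonal hT.eigenvalues * P) i i =
      ∑ k, hT.eigenvalues k * (P : Matrix ι ι ℝ) k i ^ 2 := by
    rw [mul_apply]
    simp only [mul_diagonal, star_apply, star_trivial, sq]
    exact Finset.sum_congr rfl fun k _ => by ring
  have hrow (k : ι) : ∑ i, (P : Matrix ι ι ℝ) k i ^ 2 = 1 := by
    simpa [mul_apply, sq] using congr_fun (congr_fun (mem_unitaryGroup_iff.mp P.2) k) k
  calc ∑ i, |(star (U : Matrix ι ι ℝ) * T * U) i i|
      ≤ ∑ i, ∑ k, |hT.eigenvalues k| * (P : Matrix ι ι ℝ) k i ^ 2 := by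
        refine Finset.sum_le_sum fun i _ => ?_
        rw [hconj, hdiag]
        refine (Finset.abs_sum_le_sum_abs _ _).trans_eq ?_
        simp only [abs_mul, abs_sq]
    _ = ∑ k, |hT.eigenvalues k| := by
        rw [Finset.sum_comm]
        simp only [← Finset.mul_sum, hrow, mul_one]

theorem sum_abs_eigenvalues_add_le {B C : Matrix ι ι ℝ} (hB : B.IsHermitian)
    (hC : C.IsHermitian) :
    ∑ i, |(hB.add hC).eigenvalues i| ≤ ∑ i, |hB.eigenvalues i| + ∑ i, |hC.eigenvalues i| := by
  have hdiag := (hB.add hC).star_eigenvectorUnitary_mul_mul_eigenvectorUnitary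
  set V := (hB.add hC).eigenvectorUnitary
  calc ∑ i, |(hB.add hC).eigenvalues i|
      = ∑ i, |(star (V : Matrix ι ι ℝ) * B * V) i i + (star (V : Matrix ι ι ℝ) * C * V) i i| := by
        simp only [← add_apply, ← add_mul, ← mul_add, hdiag, diagonal_apply_eq]
    _ ≤ ∑ i, |(star (V : Matrix ι ι ℝ) * B * V) i i|
          + ∑ i, |(star (V : Matrix ι ι ℝ) * C * V) i i| := by
        rw [← Finset.sum_add_distrib]
        exact Finset.sum_le_sum fun i _ => abs_add_le _ _
    _ ≤ ∑ i, |hB.eigenvalues i| + ∑ i, |hC.eigenvalues i| :=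
        add_le_add (hB.sum_abs_diag_star_mul_mul_le V) (hC.sum_abs_diag_star_mul_mul_le V)

theorem sum_eigenvalues_conjTranspose_mul_self (hT : T.IsHermitian) (f : ℝ → ℝ) :
    ∑ i, f ((isHermitian_conjTranspose_mul_self T).eigenvalues i) =
      ∑ i, f (hT.eigenvalues i ^ 2) := by
  have hsq :
      (Tᴴ * T).charpoly = ∏ i, (Polynomial.X - Polynomial.C (hT.eigenvalues i ^ 2)) := by
    rw [hT.eq, ← sq, ← cfc_pow_id (R := ℝ) T 2 hT.isSelfAdjoint]
    exact hT.charpoly_cfc_eq _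
  rw [(isHermitian_conjTranspose_mul_self T).charpoly_eq] at hsq
  have hroots := congrArg (fun p => (p.roots.map f).sum) hsq
  simpa only [Polynomial.roots_prod_X_sub_C_univ, Multiset.map_map, Finset.sum_map_val,
    RCLike.ofReal_real_eq_id, Function.comp_apply, id] using hroots

end IsHermitian

end Matrix

section NuclearNorm

variable {n : ℕ}

theorem nuclearNorm_eq_sum_abs_eigenvalues {S : Matrix (Fin n) (Fin n) ℝ} (hS : S.IsHermitian) :
    nuclearNorm S = ∑ i, |hS.eigenvalues i| := by
  simp only [nuclearNorm, hS.sum_eigenvalues_conjTranspose_mul_self, Real.sqrt_sq_eq_abs]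

theorem nuclearNorm_add_le {B C : Matrix (Fin n) (Fin n) ℝ} (hB : B.IsHermitian)
    (hC : C.IsHermitian) : nuclearNorm (B + C) ≤ nuclearNorm B + nuclearNorm C := by
  rw [nuclearNorm_eq_sum_abs_eigenvalues hB, nuclearNorm_eq_sum_abs_eigenvalues hC,
    nuclearNorm_eq_sum_abs_eigenvalues (hB.add hC)]
  exact hB.sum_abs_eigenvalues_add_le hC

theorem frobNorm_eq_sqrt_trace (M : Matrix (Fin n) (Fin n) ℝ) :
    frobNorm M = √(Mᴴ * M).trace := by
  rw [frobNorm, trace, Finset.sum_comm]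
  simp only [diag_apply, mul_apply, conjTranspose_apply, star_trivial, sq]

theorem nuclearNorm_le_sqrt_rank_mul_frobNorm (M : Matrix (Fin n) (Fin n) ℝ) :
    nuclearNorm M ≤ √M.rank * frobNorm M := by
  set hH := isHermitian_conjTranspose_mul_self M
  set μ := hH.eigenvalues
  have hμ : ∀ i, 0 ≤ μ i := (posSemidef_conjTranspose_mul_self M).eigenvalues_nonneg
  set s := Finset.univ.filter fun i => μ i ≠ 0
  have hcard : (s.card : ℝ) = M.rank := by
    rw [← rank_conjTranspose_mul_self, hH.rank_eq_card_non_zero_eigs, Fintype.card_subtype]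
  have htrace : ∑ i ∈ s, μ i = (Mᴴ * M).trace := by
    rw [Finset.sum_filter_ne_zero, hH.trace_eq_sum_eigenvalues]
    rfl
  calc nuclearNorm M = ∑ i ∈ s, √(μ i) :=
        (Finset.sum_filter_of_ne (p := fun i => μ i ≠ 0) fun _ _ h hi =>
          h (Real.sqrt_eq_zero'.mpr hi.le)).symm
    _ = ∑ i ∈ s, √1 * √(μ i) := by simp only [Real.sqrt_one, one_mul]
    _ ≤ √(∑ i ∈ s, 1) * √(∑ i ∈ s, μ i) :=
        Real.sum_sqrt_mul_sqrt_le s (fun _ => zero_le_one) hμ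
    _ = √M.rank * frobNorm M := by
        rw [frobNorm_eq_sqrt_trace, htrace, ← hcard, Finset.sum_const, nsmul_one]

end NuclearNorm

theorem centerJ_eq_one_sub_vecMulVec (n : ℕ) :
    centerJ n = 1 - vecMulVec (fun _ => (n : ℝ)⁻¹) 1 := by
  ext i j
  simp [centerJ]

theorem isSymm_centerJ (n : ℕ) : (centerJ n).IsSymm := by
  simp only [centerJ, IsSymm, transpose_sub, transpose_one, transpose_smul]
  rfl

theorem rank_sub_centerJ_mul_mul_centerJ_le (n : ℕ) (A : Matrix (Fin n) (Fin n) ℝ) :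
    (A - centerJ n * A * centerJ n).rank ≤ 2 := by
  have hK := rank_vecMulVec_le (fun _ : Fin n => (n : ℝ)⁻¹) (1 : Fin n → ℝ)
  rw [centerJ_eq_one_sub_vecMulVec]
  exact (rank_sub_one_sub_mul_mul_one_sub_le _ A).trans (by omega)

theorem nuclearNorm_split_general (n : ℕ)
    (A : Matrix (Fin n) (Fin n) ℝ) (hA : A.IsSymm) :
    nuclearNorm A ≤
      Real.sqrt 2 * frobNorm (A - centerJ n * A * centerJ n) +
        nuclearNorm (centerJ n * A * centerJ n) := by
  have hAh : A.IsHermitian := isHermitian_iff_isSymm.mpr hA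
  have hJAJ : (centerJ n * A * centerJ n).IsHermitian := by
    have := isHermitian_mul_mul_conjTranspose (centerJ n) hAh
    rwa [conjTranspose_eq_transpose_of_trivial, (isSymm_centerJ n).eq] at this
  set JAJ := centerJ n * A * centerJ n
  have hrank : √((A - JAJ).rank : ℝ) ≤ √2 := by
    gcongr
    exact_mod_cast rank_sub_centerJ_mul_mul_centerJ_le n A
  calc nuclearNorm A = nuclearNorm ((A - JAJ) + JAJ) := by rw [sub_add_cancel]
    _ ≤ nuclearNorm (A - JAJ) + nuclearNorm JAJ := nuclearNorm_add_le (hAh.sub hJAJ) hJAJ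
    _ ≤ √2 * frobNorm (A - JAJ) + nuclearNorm JAJ := by
        gcongr
        exact (nuclearNorm_le_sqrt_rank_mul_frobNorm _).trans
          (mul_le_mul_of_nonneg_right hrank (Real.sqrt_nonneg _))

/-- For symmetric hollow `A`: `‖A‖_* ≤ √2 ‖A - JAJ‖_F + ‖JAJ‖_*`. -/
theorem nuclearNorm_split (n : ℕ) (hn : 1 ≤ n)
    (A : Matrix (Fin n) (Fin n) ℝ) (hA : A.IsSymm) (hdiag : ∀ i, A i i = 0) :
    nuclearNorm A ≤
      Real.sqrt 2 * frobNorm (A - centerJ n * A * centerJ n) +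
        nuclearNorm (centerJ n * A * centerJ n) :=
  nuclearNorm_split_general n A hA
end

section
/- The almost positive semidefinite cone admits the representation K^n_+ = { H · [[Z, z],[z^T, z_0]] · H : Z ∈ S^{n-1}_+, z ∈ ℝ^{n-1}, z_0 ∈ ℝ }, where H is the Householder matrix with u = (1,...,1,√n+1)^T and S^{n-1}_+ is the cone of positive semidefinite (n-1)×(n-1) matrices. -/
open Matrix

/-- The vector `u = (1,…,1,√(n+1)+1)ᵀ`. -/
noncomputable def uvec (n : ℕ) : Fin (n + 1) → ℝ :=
  fun i => if i = Fin.last n then Real.sqrt (n + 1) + 1 else 1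

/-- The Householder matrix `H = I - (2/(uᵀu)) u uᵀ`. -/
noncomputable def householderH (n : ℕ) : Matrix (Fin (n + 1)) (Fin (n + 1)) ℝ :=
  1 - (2 / (uvec n ⬝ᵥ uvec n)) • Matrix.vecMulVec (uvec n) (uvec n)

/-!
`H` is a symmetric involution, and since `‖𝟙‖ = ‖𝟙 - u‖` it reflects `𝟙` onto
`𝟙 - u = -√(n+1) e`, with `e` the last standard basis vector. Hence
`𝟙ᵀx = (H𝟙)ᵀ(Hx) = -√(n+1) eᵀHx`, so `x ↦ Hx` maps the hyperplane `𝟙ᵀx = 0` onto `eᗮ`, and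
`xᵀAx = (Hx)ᵀ(HAH)(Hx)`. Thus `A` is almost positive semidefinite iff the quadratic form of
`W = HAH` is nonnegative on `eᗮ`, i.e. iff the block of `W` left after deleting the last row and
column is positive semidefinite; and `A = HWH`.
-/

section Householder

variable {ι K : Type*} [Fintype ι] [DecidableEq ι] [Field K]

noncomputable def householder (u : ι → K) : Matrix ι ι K :=
  1 - (2 / (u ⬝ᵥ u)) • vecMulVec u u

lemma householder_mulVec (u x : ι → K) :
    householder u *ᵥ x = x - (2 / (u ⬝ᵥ u) * (u ⬝ᵥ x)) • u := by
  rw [householder, sub_mulVec, one_mulVec, smul_mulVec, vecMulVec_mulVec, op_smul_eq_smul,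
    smul_smul]

lemma householder_isSymm (u : ι → K) : (householder u).IsSymm :=
  isSymm_one.sub (IsSymm.smul (transpose_vecMulVec u u) _)

lemma householder_mul_self {u : ι → K} (hu : u ⬝ᵥ u ≠ 0) :
    householder u * householder u = 1 := by
  have hP : vecMulVec u u * vecMulVec u u = (u ⬝ᵥ u) • vecMulVec u u := by
    rw [vecMulVec_mul_vecMulVec, vecMulVec_smul]
  have hc : 2 / (u ⬝ᵥ u) * (2 / (u ⬝ᵥ u)) * (u ⬝ᵥ u) = 2 / (u ⬝ᵥ u) + 2 / (u ⬝ᵥ u) := by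
    field_simp
    ring
  rw [householder, sub_mul, mul_sub, mul_sub, one_mul, mul_one, one_mul, smul_mul_smul_comm, hP,
    smul_smul, hc, add_smul]
  abel

lemma householder_mulVec_householder_mulVec {u : ι → K} (hu : u ⬝ᵥ u ≠ 0) (x : ι → K) :
    householder u *ᵥ householder u *ᵥ x = x := by
  rw [mulVec_mulVec, householder_mul_self hu, one_mulVec]

lemma householder_mulVec_dotProduct_householder_mulVec {u : ι → K} (hu : u ⬝ᵥ u ≠ 0)
    (x y : ι → K) : householder u *ᵥ x ⬝ᵥ householder u *ᵥ y = x ⬝ᵥ y := by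
  rw [dotProduct_mulVec, ← mulVec_transpose, (householder_isSymm u).eq,
    householder_mulVec_householder_mulVec hu]

/-- The hypothesis says `x ⬝ᵥ x = (x - u) ⬝ᵥ (x - u)`. -/
lemma householder_mulVec_of_two_mul_dotProduct_eq {u x : ι → K} (hu : u ⬝ᵥ u ≠ 0)
    (h : 2 * (u ⬝ᵥ x) = u ⬝ᵥ u) : householder u *ᵥ x = x - u := by
  rw [householder_mulVec, div_mul_eq_mul_div, h, div_self hu, one_smul]

end Householder

lemma Matrix.IsSymm.transpose_mul_mul {m n R : Type*} [Fintype m] [CommSemiring R]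
    {A : Matrix m m R} (hA : A.IsSymm) (S : Matrix m n R) : (Sᵀ * A * S).IsSymm := by
  rw [IsSymm, transpose_mul, transpose_mul, hA.eq, transpose_transpose, Matrix.mul_assoc]

lemma dotProduct_transpose_mul_mul_mulVec {m n R : Type*} [Fintype m] [Fintype n]
    [CommSemiring R] (S : Matrix m n R) (A : Matrix m m R) (x : n → R) :
    x ⬝ᵥ (Sᵀ * A * S) *ᵥ x = S *ᵥ x ⬝ᵥ A *ᵥ S *ᵥ x := by
  rw [← mulVec_mulVec, ← mulVec_mulVec, dotProduct_mulVec, vecMul_transpose]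

section LeadingBlock

variable {n : ℕ}

lemma dotProduct_mulVec_eq_submatrix_castSucc {R : Type*} [CommSemiring R]
    (W : Matrix (Fin (n + 1)) (Fin (n + 1)) R) {v : Fin (n + 1) → R}
    (hv : v (Fin.last n) = 0) :
    v ⬝ᵥ W *ᵥ v =
      v ∘ Fin.castSucc ⬝ᵥ W.submatrix Fin.castSucc Fin.castSucc *ᵥ v ∘ Fin.castSucc := by
  simp [dotProduct, mulVec, Fin.sum_univ_castSucc, hv]

lemma posSemidef_submatrix_castSucc_iff {W : Matrix (Fin (n + 1)) (Fin (n + 1)) ℝ}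
    (hW : W.IsSymm) :
    (W.submatrix Fin.castSucc Fin.castSucc).PosSemidef ↔
      ∀ v : Fin (n + 1) → ℝ, v (Fin.last n) = 0 → 0 ≤ v ⬝ᵥ W *ᵥ v := by
  rw [posSemidef_iff_dotProduct_mulVec, isHermitian_iff_isSymm]
  refine ⟨fun ⟨_, h⟩ v hv => ?_, fun h => ⟨hW.submatrix _, fun y => ?_⟩⟩
  · simpa [dotProduct_mulVec_eq_submatrix_castSucc W hv] using h (v ∘ Fin.castSucc)
  · have := h (Fin.snoc y 0) (Fin.snoc_last _ _)
    rwa [dotProduct_mulVec_eq_submatrix_castSucc W (Fin.snoc_last _ _), Fin.snoc_comp_castSucc]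
      at this

end LeadingBlock

def IsAlmostPosSemidef {ι : Type*} [Fintype ι] (A : Matrix ι ι ℝ) : Prop :=
  ∀ x : ι → ℝ, (fun _ => (1 : ℝ)) ⬝ᵥ x = 0 → 0 ≤ x ⬝ᵥ A *ᵥ x

section HouseholderH

variable {n : ℕ}

lemma uvec_castSucc (i : Fin n) : uvec n i.castSucc = 1 := by
  simp [uvec, (Fin.castSucc_lt_last i).ne]

lemma uvec_last : uvec n (Fin.last n) = √(n + 1) + 1 := by
  simp [uvec]

lemma one_sub_uvec : (fun _ => (1 : ℝ)) - uvec n = Pi.single (Fin.last n) (-√(n + 1)) := by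
  ext i
  induction i using Fin.lastCases with
  | last => simp [uvec_last]
  | cast i => simp [uvec_castSucc, (Fin.castSucc_lt_last i).ne]

lemma uvec_dotProduct_one : uvec n ⬝ᵥ (fun _ => 1) = n + 1 + √(n + 1) := by
  simp only [dotProduct, Fin.sum_univ_castSucc, uvec_castSucc, uvec_last, mul_one,
    Finset.sum_const, Finset.card_univ, Fintype.card_fin, nsmul_eq_mul]
  ring

lemma uvec_dotProduct_self : uvec n ⬝ᵥ uvec n = 2 * (n + 1 + √(n + 1)) := by
  have hs : √((n : ℝ) + 1) * √(n + 1) = n + 1 := Real.mul_self_sqrt (by positivity)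
  simp only [dotProduct, Fin.sum_univ_castSucc, uvec_castSucc, uvec_last, mul_one,
    Finset.sum_const, Finset.card_univ, Fintype.card_fin, nsmul_eq_mul]
  linear_combination hs

lemma uvec_dotProduct_self_ne_zero : uvec n ⬝ᵥ uvec n ≠ 0 := by
  rw [uvec_dotProduct_self]
  positivity

lemma householderH_eq_householder : householderH n = householder (uvec n) := rfl

lemma householderH_isSymm : (householderH n).IsSymm := householder_isSymm _

lemma householderH_mulVec_householderH_mulVec (x : Fin (n + 1) → ℝ) :
    householderH n *ᵥ householderH n *ᵥ x = x :=
  householder_mulVec_householder_mulVec uvec_dotProduct_self_ne_zero x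

lemma householderH_mul_mul_householderH_involutive :
    Function.Involutive fun A => householderH n * A * householderH n := fun A => by
  dsimp only
  rw [householderH_eq_householder, ← mul_assoc, ← mul_assoc,
    householder_mul_self uvec_dotProduct_self_ne_zero, one_mul, mul_assoc,
    householder_mul_self uvec_dotProduct_self_ne_zero, mul_one]

lemma householderH_mulVec_one :
    householderH n *ᵥ (fun _ => 1) = Pi.single (Fin.last n) (-√(n + 1)) := by
  rw [householderH_eq_householder, householder_mulVec_of_two_mul_dotProduct_eq
    uvec_dotProduct_self_ne_zero (by rw [uvec_dotProduct_one, uvec_dotProduct_self]),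
    one_sub_uvec]

lemma one_dotProduct_eq_zero_iff (x : Fin (n + 1) → ℝ) :
    (fun _ => (1 : ℝ)) ⬝ᵥ x = 0 ↔ (householderH n *ᵥ x) (Fin.last n) = 0 := by
  have hs : -√((n : ℝ) + 1) ≠ 0 := by
    rw [neg_ne_zero]
    positivity
  rw [← householder_mulVec_dotProduct_householder_mulVec uvec_dotProduct_self_ne_zero,
    ← householderH_eq_householder, householderH_mulVec_one, single_dotProduct,
    mul_eq_zero, or_iff_right hs]

lemma Matrix.IsSymm.householderH_mul_mul_householderH
    {A : Matrix (Fin (n + 1)) (Fin (n + 1)) ℝ} (hA : A.IsSymm) :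
    (householderH n * A * householderH n).IsSymm := by
  simpa only [householderH_isSymm.eq] using hA.transpose_mul_mul (householderH n)

lemma isAlmostPosSemidef_iff_posSemidef_submatrix {A : Matrix (Fin (n + 1)) (Fin (n + 1)) ℝ}
    (hA : A.IsSymm) :
    IsAlmostPosSemidef A ↔
      ((householderH n * A * householderH n).submatrix Fin.castSucc Fin.castSucc).PosSemidef := by
  nth_rw 1 [← householderH_isSymm.eq]
  rw [posSemidef_submatrix_castSucc_iff (hA.transpose_mul_mul _), IsAlmostPosSemidef,
    (Function.Involutive.surjective householderH_mulVec_householderH_mulVec).forall]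
  refine forall_congr' fun v => ?_
  rw [one_dotProduct_eq_zero_iff, householderH_mulVec_householderH_mulVec,
    dotProduct_transpose_mul_mul_mulVec]

end HouseholderH

/-- `K^n_+ = { H · [[Z, z],[zᵀ, z₀]] · H : Z ⪰ 0 }`. -/
theorem almost_psd_cone_householder (n : ℕ) :
    {A : Matrix (Fin (n + 1)) (Fin (n + 1)) ℝ | A.IsSymm ∧
        ∀ x : Fin (n + 1) → ℝ,
          (fun _ => (1 : ℝ)) ⬝ᵥ x = 0 → 0 ≤ x ⬝ᵥ A.mulVec x} =
      {A : Matrix (Fin (n + 1)) (Fin (n + 1)) ℝ |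
        ∃ W : Matrix (Fin (n + 1)) (Fin (n + 1)) ℝ,
          W.IsSymm ∧
          (W.submatrix (Fin.castSucc : Fin n → Fin (n + 1))
            (Fin.castSucc : Fin n → Fin (n + 1))).PosSemidef ∧
          A = householderH n * W * householderH n} := by
  ext A
  constructor
  · rintro ⟨hA, hA_almost⟩
    refine ⟨_, hA.householderH_mul_mul_householderH, ?_,
      (householderH_mul_mul_householderH_involutive A).symm⟩
    exact (isAlmostPosSemidef_iff_posSemidef_submatrix hA).1 hA_almost
  · rintro ⟨W, hW, hW_psd, rfl⟩
    have hHWH := hW.householderH_mul_mul_householderH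
    refine ⟨hHWH, (isAlmostPosSemidef_iff_posSemidef_submatrix hHWH).2 ?_⟩
    simpa only [householderH_mul_mul_householderH_involutive W] using hW_psd
end

section
/- Suppose ||D̂ - D̄||_F < λ_r(-JD̄J), where λ_r denotes the r-th largest eigenvalue and r = rank(-JD̄J), with -JD̄J positive semidefinite and -JD̂J positive semidefinite. Then rank(-JD̂J) ≥ rank(-JD̄J). -/
open Matrix

/-- The `r`-th largest eigenvalue (`r = 1` being the largest) of a Hermitian matrix. -/
noncomputable def rthLargestEigenvalue {n : ℕ} {A : Matrix (Fin n) (Fin n) ℝ}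
    (hA : A.IsHermitian) (r : ℕ) : ℝ :=
  (((List.finRange n).map hA.eigenvalues).mergeSort (fun a b => b ≤ a)).getD (r - 1) 0

/-!
Let `A = -J D̄ J`, `B = -J D̂ J`, and let `W` be the matrix whose columns are the orthonormal
eigenvectors of `A` with eigenvalue at least `λ = λ_r(A)`; since the eigenvalues are sorted, there are at least `r` of
them. On vectors `x = W a` the quadratic form of `A` is at least `λ ‖a‖²`, while that of
`A - B = J (D̂ - D̄) J` is at most `‖D̂ - D̄‖_F ‖a‖²` by Cauchy–Schwarz, since `J` is an orthogonal
projection. So `a ↦ aᵀ (Wᵀ B W) a` is positive definite when `‖D̂ - D̄‖_F < λ`, which forces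
`r ≤ rank (Wᵀ B W) ≤ rank B`.
-/

open Finset

namespace Matrix

variable {m n R : Type*} [Fintype m] [Fintype n]

theorem mulVec_dotProduct_mulVec [CommSemiring R] (W : Matrix n m R) (a b : m → R) :
    (W *ᵥ a) ⬝ᵥ (W *ᵥ b) = a ⬝ᵥ ((Wᵀ * W) *ᵥ b) := by
  rw [← mulVec_mulVec, dotProduct_mulVec a, vecMul_transpose]

theorem dotProduct_mulVec_transpose_mul_mul [CommSemiring R] (W : Matrix n m R) (M : Matrix n n R)
    (a : m → R) : a ⬝ᵥ ((Wᵀ * M * W) *ᵥ a) = (W *ᵥ a) ⬝ᵥ (M *ᵥ (W *ᵥ a)) := by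
  rw [← mulVec_mulVec, ← mulVec_mulVec, dotProduct_mulVec, vecMul_transpose]

theorem mulVec_dotProduct_mulVec_self_le {P : Matrix n n ℝ} (hPt : Pᵀ = P) (hPP : P * P = P)
    (x : n → ℝ) : (P *ᵥ x) ⬝ᵥ (P *ᵥ x) ≤ x ⬝ᵥ x := by
  have hPx : (P *ᵥ x) ⬝ᵥ (P *ᵥ x) = x ⬝ᵥ (P *ᵥ x) := by
    rw [mulVec_dotProduct_mulVec, hPt, hPP]
  have h := dotProduct_star_self_nonneg (x - P *ᵥ x)
  simp only [star_trivial, sub_dotProduct, dotProduct_sub, hPx, dotProduct_comm (P *ᵥ x) x] at h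
  linarith

theorem rank_eq_card_of_forall_dotProduct_mulVec_pos [DecidableEq m] {M : Matrix m m ℝ}
    (hM : ∀ a ≠ 0, 0 < a ⬝ᵥ (M *ᵥ a)) : M.rank = Fintype.card m := by
  refine M.rank_of_isUnit (mulVec_injective_iff_isUnit.mp fun a b hab => ?_)
  by_contra hne
  have := hM (a - b) (sub_ne_zero.mpr hne)
  rw [mulVec_sub, hab, sub_self, dotProduct_zero] at this
  exact this.false

theorem mul_dotProduct_self_le_dotProduct_diagonal_mulVec [DecidableEq m] {c : ℝ} {d : m → ℝ}
    (hd : ∀ i, c ≤ d i) (a : m → ℝ) : c * (a ⬝ᵥ a) ≤ a ⬝ᵥ (diagonal d *ᵥ a) := by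
  simp only [dotProduct, mulVec_diagonal, Finset.mul_sum]
  exact Finset.sum_le_sum fun i _ => by nlinarith [hd i, mul_self_nonneg (a i)]

theorem dotProduct_mulVec_le_frobNorm_mul {k : ℕ} (M : Matrix (Fin k) (Fin k) ℝ) (x : Fin k → ℝ) :
    x ⬝ᵥ (M *ᵥ x) ≤ frobNorm M * (x ⬝ᵥ x) := by
  have hsum : x ⬝ᵥ (M *ᵥ x) = ∑ p : Fin k × Fin k, M p.1 p.2 * (x p.1 * x p.2) := by
    simp only [dotProduct, mulVec, Fintype.sum_prod_type, Finset.mul_sum]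
    exact Finset.sum_congr rfl fun i _ => Finset.sum_congr rfl fun j _ => by ring
  have hsq : ∑ p : Fin k × Fin k, (x p.1 * x p.2) ^ 2 = (x ⬝ᵥ x) ^ 2 := by
    simp only [dotProduct, Fintype.sum_prod_type, sq, Finset.sum_mul_sum]
    exact Finset.sum_congr rfl fun i _ => Finset.sum_congr rfl fun j _ => by ring
  calc x ⬝ᵥ (M *ᵥ x)
        ≤ √(∑ p : Fin k × Fin k, M p.1 p.2 ^ 2) * √(∑ p : Fin k × Fin k, (x p.1 * x p.2) ^ 2) :=
        hsum ▸ Real.sum_mul_le_sqrt_mul_sqrt _ _ _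
    _ = frobNorm M * (x ⬝ᵥ x) := by
        rw [hsq, Real.sqrt_sq (by simpa using dotProduct_star_self_nonneg x), frobNorm,
          Fintype.sum_prod_type]

theorem dotProduct_mulVec_conj_le_frobNorm_mul {k : ℕ} {P : Matrix (Fin k) (Fin k) ℝ}
    (hPt : Pᵀ = P) (hPP : P * P = P) (M : Matrix (Fin k) (Fin k) ℝ) (x : Fin k → ℝ) :
    x ⬝ᵥ ((P * M * P) *ᵥ x) ≤ frobNorm M * (x ⬝ᵥ x) := by
  calc x ⬝ᵥ ((P * M * P) *ᵥ x) = (P *ᵥ x) ⬝ᵥ (M *ᵥ (P *ᵥ x)) := by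
        rw [← dotProduct_mulVec_transpose_mul_mul, hPt]
    _ ≤ frobNorm M * ((P *ᵥ x) ⬝ᵥ (P *ᵥ x)) := dotProduct_mulVec_le_frobNorm_mul M _
    _ ≤ frobNorm M * (x ⬝ᵥ x) :=
        mul_le_mul_of_nonneg_left (mulVec_dotProduct_mulVec_self_le hPt hPP x) (Real.sqrt_nonneg _)

theorem sub_frobNorm_mul_dotProduct_self_le [DecidableEq m] {k : ℕ} {W : Matrix (Fin k) m ℝ}
    (hW : Wᵀ * W = 1)
    {A : Matrix (Fin k) (Fin k) ℝ} {c : ℝ} (hA : ∀ a, c * (a ⬝ᵥ a) ≤ a ⬝ᵥ ((Wᵀ * A * W) *ᵥ a))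
    {P : Matrix (Fin k) (Fin k) ℝ} (hPt : Pᵀ = P) (hPP : P * P = P) (E : Matrix (Fin k) (Fin k) ℝ)
    (a : m → ℝ) : (c - frobNorm E) * (a ⬝ᵥ a) ≤ a ⬝ᵥ ((Wᵀ * (A - P * E * P) * W) *ᵥ a) := by
  have hnorm : (W *ᵥ a) ⬝ᵥ (W *ᵥ a) = a ⬝ᵥ a := by
    rw [mulVec_dotProduct_mulVec, hW, one_mulVec]
  have hE : a ⬝ᵥ ((Wᵀ * (P * E * P) * W) *ᵥ a) ≤ frobNorm E * (a ⬝ᵥ a) := by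
    rw [dotProduct_mulVec_transpose_mul_mul, ← hnorm]
    exact dotProduct_mulVec_conj_le_frobNorm_mul hPt hPP E _
  rw [Matrix.mul_sub, Matrix.sub_mul, sub_mulVec, dotProduct_sub]
  linarith [hA a]

end Matrix

theorem centerJ_transpose (n : ℕ) : (centerJ n)ᵀ = centerJ n := by
  ext i j
  simp [centerJ, one_apply, eq_comm]

theorem centerJ_mul_self (n : ℕ) : centerJ n * centerJ n = centerJ n := by
  rcases n.eq_zero_or_pos with rfl | hn_pos
  · exact Subsingleton.elim _ _
  have hK : (of fun _ _ => 1 : Matrix (Fin n) (Fin n) ℝ) * (of fun _ _ => 1) =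
      (n : ℝ) • of fun _ _ => 1 := by
    ext; simp [mul_apply]
  have hcoef : (n : ℝ)⁻¹ * (n : ℝ)⁻¹ * n = (n : ℝ)⁻¹ := by field_simp
  simp only [centerJ, sub_mul, mul_sub, one_mul, mul_one, smul_mul_smul_comm, hK, smul_smul, hcoef]
  abel

namespace Matrix.IsHermitian

variable {m n : Type*} [DecidableEq m] [Fintype n] [DecidableEq n]
  {A : Matrix n n ℝ} (hA : A.IsHermitian) {e : m → n}

theorem transpose_eigenvectorUnitary_mul_self :
    (hA.eigenvectorUnitary : Matrix n n ℝ)ᵀ * hA.eigenvectorUnitary = 1 := by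
  simpa [star_eq_conjTranspose] using Unitary.coe_star_mul_self hA.eigenvectorUnitary

theorem transpose_eigenvectorUnitary_mul_mul_self :
    (hA.eigenvectorUnitary : Matrix n n ℝ)ᵀ * A * hA.eigenvectorUnitary =
      diagonal hA.eigenvalues := by
  simpa [star_eq_conjTranspose, Unitary.conjStarAlgAut_star_apply] using
    hA.conjStarAlgAut_star_eigenvectorUnitary

theorem transpose_submatrix_eigenvectorUnitary_mul_self (he : Function.Injective e) :
    ((hA.eigenvectorUnitary : Matrix n n ℝ).submatrix id e)ᵀ *
      (hA.eigenvectorUnitary : Matrix n n ℝ).submatrix id e = 1 := by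
  rw [transpose_submatrix, ← submatrix_mul _ _ _ _ _ Function.bijective_id,
    transpose_eigenvectorUnitary_mul_self, submatrix_one _ he]

theorem transpose_submatrix_eigenvectorUnitary_mul_mul_self (he : Function.Injective e) :
    ((hA.eigenvectorUnitary : Matrix n n ℝ).submatrix id e)ᵀ * A *
      (hA.eigenvectorUnitary : Matrix n n ℝ).submatrix id e = diagonal (hA.eigenvalues ∘ e) := by
  have hleft : (hA.eigenvectorUnitary : Matrix n n ℝ)ᵀ.submatrix e id * A =
      ((hA.eigenvectorUnitary : Matrix n n ℝ)ᵀ * A).submatrix e id :=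
    (submatrix_mul _ _ _ id id Function.bijective_id).symm
  rw [transpose_submatrix, hleft, ← submatrix_mul _ _ _ _ _ Function.bijective_id,
    transpose_eigenvectorUnitary_mul_mul_self,
    submatrix_diagonal _ _ he]

theorem mul_dotProduct_self_le_of_le_eigenvalues [Fintype m] (he : Function.Injective e) {c : ℝ}
    (hc : ∀ i, c ≤ hA.eigenvalues (e i)) (a : m → ℝ) :
    c * (a ⬝ᵥ a) ≤ a ⬝ᵥ ((((hA.eigenvectorUnitary : Matrix n n ℝ).submatrix id e)ᵀ * A *
      (hA.eigenvectorUnitary : Matrix n n ℝ).submatrix id e) *ᵥ a) := by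
  rw [transpose_submatrix_eigenvectorUnitary_mul_mul_self hA he]
  exact mul_dotProduct_self_le_dotProduct_diagonal_mulVec hc a

end Matrix.IsHermitian

theorem List.succ_le_countP_getElem_le {α : Type*} [LinearOrder α] {L : List α}
    (hL : L.Pairwise (· ≥ ·)) {k : ℕ} (hk : k < L.length) :
    k + 1 ≤ L.countP (fun a => L[k] ≤ a) := by
  have htake : ∀ a ∈ L.take (k + 1), decide (L[k] ≤ a) = true := by
    intro a ha
    obtain ⟨j, hj, rfl⟩ := List.mem_take_iff_getElem.mp ha
    rcases (Nat.lt_succ_iff.mp (lt_of_lt_of_le hj (min_le_left _ _))).lt_or_eq with hjk | rfl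
    · exact decide_eq_true (List.pairwise_iff_getElem.mp hL j k _ hk hjk)
    · exact decide_eq_true le_rfl
  have h := (L.take_sublist (k + 1)).countP_le (p := fun a => decide (L[k] ≤ a))
  rwa [List.countP_eq_length.mpr htake, List.length_take, min_eq_left (by omega)] at h

theorem le_card_filter_rthLargestEigenvalue_le {n r : ℕ} {A : Matrix (Fin n) (Fin n) ℝ}
    (hA : A.IsHermitian) (hr : r ≤ n) :
    r ≤ #{i | rthLargestEigenvalue hA r ≤ hA.eigenvalues i} := by
  obtain _ | k := r
  · exact Nat.zero_le _
  set L := ((List.finRange n).map hA.eigenvalues).mergeSort (fun a b => b ≤ a)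
  have hk : k < L.length := by
    simp only [L, List.length_mergeSort, List.length_map, List.length_finRange]; omega
  have hlam : rthLargestEigenvalue hA (k + 1) = L[k] := List.getD_eq_getElem _ _ hk
  calc k + 1 ≤ L.countP (fun a => L[k] ≤ a) :=
        List.succ_le_countP_getElem_le (List.pairwise_mergeSort' _ _) hk
    _ = (List.finRange n).countP (fun i => L[k] ≤ hA.eigenvalues i) := by
        rw [(List.mergeSort_perm _ _).countP_eq, List.countP_map]; rfl
    _ = #{i | rthLargestEigenvalue hA (k + 1) ≤ hA.eigenvalues i} := by
        rw [hlam, Fin.univ_def, List.countP_eq_length_filter]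
        rfl

theorem rank_lower_bound_general (n : ℕ)
    (Dhat Dbar : Matrix (Fin n) (Fin n) ℝ)
    (hbar : (-(centerJ n * Dbar * centerJ n)).PosSemidef)
    (r : ℕ) (hr : r = (-(centerJ n * Dbar * centerJ n)).rank)
    (hclose : frobNorm (Dhat - Dbar) < rthLargestEigenvalue hbar.1 r) :
    (-(centerJ n * Dhat * centerJ n)).rank ≥ (-(centerJ n * Dbar * centerJ n)).rank := by
  set J := centerJ n
  set A := -(J * Dbar * J)
  set lam := rthLargestEigenvalue hbar.1 r
  let W := (hbar.1.eigenvectorUnitary : Matrix (Fin n) (Fin n) ℝ).submatrix id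
    (Subtype.val : {i // lam ≤ hbar.1.eigenvalues i} → Fin n)
  have hB : -(J * Dhat * J) = A - J * (Dhat - Dbar) * J := by
    simp only [A, mul_sub, sub_mul]; abel
  have hpos : ∀ a ≠ 0, 0 < a ⬝ᵥ ((Wᵀ * -(J * Dhat * J) * W) *ᵥ a) := fun a ha => by
    have ha' : 0 < a ⬝ᵥ a := by simpa using dotProduct_star_self_pos_iff.mpr ha
    rw [hB]
    exact (mul_pos (sub_pos.mpr hclose) ha').trans_le <| sub_frobNorm_mul_dotProduct_self_le
      (hbar.1.transpose_submatrix_eigenvectorUnitary_mul_self Subtype.val_injective)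
      (hbar.1.mul_dotProduct_self_le_of_le_eigenvalues Subtype.val_injective Subtype.prop)
      (centerJ_transpose n) (centerJ_mul_self n) _ a
  have hrn : r ≤ n := hr ▸ (rank_le_card_width A).trans_eq (Fintype.card_fin n)
  calc A.rank = r := hr.symm
    _ ≤ #{i | lam ≤ hbar.1.eigenvalues i} := le_card_filter_rthLargestEigenvalue_le hbar.1 hrn
    _ = (Wᵀ * -(J * Dhat * J) * W).rank := by
        rw [rank_eq_card_of_forall_dotProduct_mulVec_pos hpos, Fintype.card_subtype]
    _ ≤ (-(J * Dhat * J)).rank := (rank_mul_le_left _ _).trans (rank_mul_le_right _ _)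

/-- If `‖D̂ - D̄‖_F < λ_r(-JD̄J)` with `r = rank(-JD̄J)` and both doubly-centered
matrices positive semidefinite, then `rank(-JD̂J) ≥ rank(-JD̄J)`. -/
theorem rank_lower_bound (n : ℕ) (hn : 1 ≤ n)
    (Dhat Dbar : Matrix (Fin n) (Fin n) ℝ)
    (hbar : (-(centerJ n * Dbar * centerJ n)).PosSemidef)
    (hhat : (-(centerJ n * Dhat * centerJ n)).PosSemidef)
    (r : ℕ) (hr : r = (-(centerJ n * Dbar * centerJ n)).rank) (hr1 : 1 ≤ r)
    (hclose : frobNorm (Dhat - Dbar) < rthLargestEigenvalue hbar.1 r) :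
    (-(centerJ n * Dhat * centerJ n)).rank ≥ (-(centerJ n * Dbar * centerJ n)).rank :=
  rank_lower_bound_general n Dhat Dbar hbar r hr hclose
end
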